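/- arXiv:1303.4905 — 2 statements merged into one kernel-verified Lean document; each statement's English description precedes it below -/
import Mathlib

section
/- Let M be the good map of a directed graph G over N ⊆ V_G, and let N' ⊆ N. Then the good map of G over N' equals the good map of M over N' (i.e., taking good maps is transitive/compositional: a good map of a good map is the good map over the smaller vertex set). -/
/-- A nonempty directed path from `u` to `v` in the graph with edge relation `E`,
all of whose intermediate nodes avoid the set `N`. -/
inductive AvoidPath {V : Type*} (E : V → V → Prop) (N : Set V) : V → V → Prop
  | single {u v : V} : E u v → AvoidPath E N u v
  | cons {u w v : V} : E u w → w ∉ N → AvoidPath E N w v → AvoidPath E N u v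

/-- Edges of the good map of `(V, E)` over the distinguished node set `N`:
exactly the pairs `x, y ∈ N` with `x ↠_N y` in `G`. -/
def goodMapEdges {V : Type*} (E : V → V → Prop) (N : Set V) : V → V → Prop :=
  fun x y => x ∈ N ∧ y ∈ N ∧ AvoidPath E N x y

/-- The good map of `(V, E)` over `N`, as a pair (vertex set, edge relation). -/
def goodMap {V : Type*} (E : V → V → Prop) (N : Set V) : Set V × (V → V → Prop) :=
  (N, goodMapEdges E N)

/-- `M = (VM, EM)` is a map of `(V, E)`: its vertices lie in `V`, and every edge
`(x, y)` of `M` joins vertices of `M` connected by a directed path in `G`. -/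
def IsMap {V : Type*} (E : V → V → Prop) (VM : Set V) (EM : V → V → Prop) : Prop :=
  ∀ x y, EM x y → x ∈ VM ∧ y ∈ VM ∧ Relation.TransGen E x y

/-- `M` is complete: paths between map nodes in `G` imply paths in `M`. -/
def MapComplete {V : Type*} (E : V → V → Prop) (VM : Set V) (EM : V → V → Prop) : Prop :=
  ∀ x y, x ∈ VM → y ∈ VM → Relation.TransGen E x y → Relation.TransGen EM x y

/-- `M` is route-complete: `x ↠_{V_M} y` in `G` implies edge `(x,y)` in `M`. -/
def RouteComplete {V : Type*} (E : V → V → Prop) (VM : Set V) (EM : V → V → Prop) : Prop :=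
  ∀ x y, x ∈ VM → y ∈ VM → AvoidPath E VM x y → EM x y

/-- `M` is non-redundant: edge `(x,y)` in `M` implies `x ↠_{V_M} y` in `G`. -/
def NonRedundant {V : Type*} (E : V → V → Prop) (VM : Set V) (EM : V → V → Prop) : Prop :=
  ∀ x y, x ∈ VM → y ∈ VM → EM x y → AvoidPath E VM x y

/-- `M` is a good map: a map that is complete, route-complete and non-redundant. -/
def GoodMap {V : Type*} (E : V → V → Prop) (VM : Set V) (EM : V → V → Prop) : Prop :=
  IsMap E VM EM ∧ MapComplete E VM EM ∧ RouteComplete E VM EM ∧ NonRedundant E VM EM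

/-!
Cutting a path of `G` that avoids `N'` at its visits to `N` splits it into segments that avoid
`N`, i.e. into edges of the good map over `N`, joined at nodes outside `N'`. Conversely, each
edge of the good map expands to a path of `G` avoiding `N ⊇ N'`, and these paths are glued at
nodes outside `N'`.
-/

namespace AvoidPath

variable {V : Type*} {E : V → V → Prop}

lemma mono {N N' : Set V} (h : N' ⊆ N) {u v : V} (p : AvoidPath E N u v) :
    AvoidPath E N' u v := by
  induction p with
  | single e => exact .single e
  | cons e hw _ ih => exact .cons e (fun hw' => hw (h hw')) ih

lemma trans {S : Set V} {u w v : V} (p : AvoidPath E S u w) (hw : w ∉ S)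
    (q : AvoidPath E S w v) : AvoidPath E S u v := by
  induction p with
  | single e => exact .cons e hw q
  | cons e hx _ ih => exact .cons e hx (ih hw q)

lemma of_goodMapEdges {N N' : Set V} (h : N' ⊆ N) {x y : V}
    (p : AvoidPath (goodMapEdges E N) N' x y) : AvoidPath E N' x y := by
  induction p with
  | single e => exact e.2.2.mono h
  | cons e hw _ ih => exact (e.2.2.mono h).trans hw ih

/-- `x` plays the role of the last node of `N` visited before `w`. -/
lemma goodMapEdges_of_forall_succ {N N' : Set V} {w y : V} (p : AvoidPath E N' w y)
    (hy : y ∈ N) {x : V} (hxN : x ∈ N) (hx : ∀ v, E w v → AvoidPath E N x v) :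
    AvoidPath (goodMapEdges E N) N' x y := by
  induction p generalizing x with
  | single e => exact .single ⟨hxN, hy, hx _ e⟩
  | @cons w u y e huN' _ ih =>
    by_cases huN : u ∈ N
    · exact .cons ⟨hxN, huN, hx u e⟩ huN' (ih hy huN fun v e' => .single e')
    · exact ih hy hxN fun v e' => (hx u e).trans huN (.single e')

lemma goodMapEdges_of_mem {N N' : Set V} {x y : V} (p : AvoidPath E N' x y) (hx : x ∈ N)
    (hy : y ∈ N) : AvoidPath (goodMapEdges E N) N' x y :=
  p.goodMapEdges_of_forall_succ hy hx fun _ e => .single e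

end AvoidPath

theorem goodMap_compositional (V : Type*) (E : V → V → Prop) (N N' : Set V)
    (h : N' ⊆ N) :
    goodMapEdges E N' = goodMapEdges (goodMapEdges E N) N' := by
  ext x y
  constructor
  · rintro ⟨hx, hy, p⟩
    exact ⟨hx, hy, p.goodMapEdges_of_mem (h hx) (h hy)⟩
  · rintro ⟨hx, hy, p⟩
    exact ⟨hx, hy, p.of_goodMapEdges h⟩
end

section
/- Let G be a directed graph and M the good map of G over N ⊆ V_G. Then for all x,y ∈ N, there is a directed path from x to y in M if and only if there is a directed path from x to y in G (good maps exactly preserve reachability among distinguished nodes). -/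
/-! Cutting a path of `G` between nodes of `N` at its visits to `N` yields `N`-avoiding segments,
each an edge of the good map; conversely, each edge of the good map is a path of `G`. -/

theorem AvoidPath.transGen {V : Type*} {E : V → V → Prop} {N : Set V} {x y : V}
    (h : AvoidPath E N x y) : Relation.TransGen E x y := by
  induction h with
  | single hxy => exact .single hxy
  | cons hxw _ _ ih => exact .head hxw ih

/-- `w` is the first node of the path after `x` that lies in `N`. -/
theorem Relation.TransGen.exists_avoidPath_reflTransGen_goodMapEdges {V : Type*}
    {E : V → V → Prop} {N : Set V} {x y : V} (h : Relation.TransGen E x y) (hy : y ∈ N) :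
    ∃ w ∈ N, AvoidPath E N x w ∧ Relation.ReflTransGen (goodMapEdges E N) w y := by
  induction h using Relation.TransGen.head_induction_on with
  | single hxy => exact ⟨_, hy, .single hxy, .refl⟩
  | @head x z hxz _ ih =>
    obtain ⟨w, hw, hzw, hwy⟩ := ih
    by_cases hz : z ∈ N
    · exact ⟨z, hz, .single hxz, .head ⟨hz, hw, hzw⟩ hwy⟩
    · exact ⟨w, hw, .cons hxz hz hzw, hwy⟩

theorem goodMap_preserves_reachability (V : Type*) (E : V → V → Prop) (N : Set V) :
    ∀ x y, x ∈ N → y ∈ N →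
      (Relation.TransGen (goodMapEdges E N) x y ↔ Relation.TransGen E x y) := by
  intro x y hx hy
  constructor
  · exact Relation.TransGen.closed (fun _ _ hab => hab.2.2.transGen) x y
  · intro h
    obtain ⟨w, hw, hxw, hwy⟩ := h.exists_avoidPath_reflTransGen_goodMapEdges hy
    exact .head' ⟨hx, hw, hxw⟩ hwy
end
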